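/- The mixture of the de la Peña e-variables under a standard normal prior, namely √(1/(1+Σᵢzᵢ²)) · exp((Σᵢzᵢ)²/(2+2Σᵢzᵢ²)), has expectation at most 1 under independent uniform random sign flips J_i ∈ {−1,1} applied to fixed reals z₁,…,z_n. -/

import Mathlib

/-!
For a fixed `x`, the de la Peña statistic `exp (x ∑ᵢ Jᵢzᵢ - x² ∑ᵢ zᵢ² / 2)` factorises over the
coordinates, and each factor has sign-flip average `cosh (x zᵢ) exp (-(x zᵢ)² / 2) ≤ 1`. Completing
the square shows that the mixture in the statement is the integral of this statistic against the
standard Gaussian in `x`, so by Fubini its sign-flip average is at most `∫ 1 = 1`.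
-/

open Real MeasureTheory ProbabilityTheory Finset

section SignFlips

variable {ι : Type*} [Fintype ι]

def signFlipSum (z : ι → ℝ) (s : ι → Bool) : ℝ := ∑ i, if s i then z i else -z i

noncomputable def deLaPena (z : ι → ℝ) (s : ι → Bool) (x : ℝ) : ℝ :=
  exp (signFlipSum z s * x - (∑ i, z i ^ 2) * x ^ 2 / 2)

lemma deLaPena_eq_prod (z : ι → ℝ) (s : ι → Bool) (x : ℝ) :
    deLaPena z s x = ∏ i, exp ((if s i then z i * x else -(z i * x)) - (z i * x) ^ 2 / 2) := by
  rw [deLaPena, ← exp_sum, signFlipSum, sum_mul, sum_mul, sum_div, ← sum_sub_distrib]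
  refine congrArg exp (sum_congr rfl fun i _ => ?_)
  split_ifs <;> ring

lemma sum_bool_exp_signed_sub_sq_le (c : ℝ) :
    ∑ b : Bool, exp ((if b then c else -c) - c ^ 2 / 2) ≤ 2 := by
  rw [Fintype.sum_bool, if_pos rfl, if_neg Bool.false_ne_true]
  calc exp (c - c ^ 2 / 2) + exp (-c - c ^ 2 / 2) = 2 * cosh c * exp (-(c ^ 2 / 2)) := by
        rw [cosh_eq, sub_eq_add_neg, sub_eq_add_neg (-c), exp_add, exp_add]; ring
    _ ≤ 2 * exp (c ^ 2 / 2) * exp (-(c ^ 2 / 2)) := by gcongr; exact cosh_le_exp_half_sq c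
    _ = 2 := by rw [mul_assoc, ← exp_add, add_neg_cancel, exp_zero, mul_one]

lemma sum_deLaPena_le [DecidableEq ι] (z : ι → ℝ) (x : ℝ) :
    ∑ s : ι → Bool, deLaPena z s x ≤ 2 ^ Fintype.card ι := by
  simp_rw [deLaPena_eq_prod]
  rw [← Fintype.prod_sum (fun i (b : Bool) =>
    exp ((if b then z i * x else -(z i * x)) - (z i * x) ^ 2 / 2))]
  calc ∏ i, ∑ b : Bool, exp ((if b then z i * x else -(z i * x)) - (z i * x) ^ 2 / 2)
      ≤ ∏ _i : ι, (2 : ℝ) :=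
        prod_le_prod (fun _ _ => sum_nonneg fun _ _ => (exp_pos _).le)
          fun _ _ => sum_bool_exp_signed_sub_sq_le _
    _ = 2 ^ Fintype.card ι := by rw [prod_const, card_univ]

end SignFlips

lemma integral_exp_mul_sub_mul_sq {a : ℝ} (ha : 0 < a) (T : ℝ) :
    ∫ x, exp (T * x - a * x ^ 2 / 2) = √(2 * π / a) * exp (T ^ 2 / (2 * a)) := by
  have hsq (x : ℝ) : exp (T * x - a * x ^ 2 / 2) =
      exp (-(a / 2) * (x - T / a) ^ 2) * exp (T ^ 2 / (2 * a)) := by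
    rw [← exp_add]; congr 1; field_simp; ring
  simp_rw [hsq]
  rw [integral_mul_const, integral_sub_right_eq_self (fun x => exp (-(a / 2) * x ^ 2)),
    integral_gaussian, div_div_eq_mul_div, mul_comm π 2]

lemma integrable_exp_mul_sub_mul_sq_gaussianReal {S : ℝ} (hS : 0 ≤ S) (T : ℝ) :
    Integrable (fun x => exp (T * x - S * x ^ 2 / 2)) (gaussianReal 0 1) := by
  refine (integrable_exp_mul_gaussianReal T).mono' (by fun_prop) (ae_of_all _ fun x => ?_)
  rw [norm_of_nonneg (exp_pos _).le, exp_le_exp]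
  nlinarith [sq_nonneg x]

lemma integral_exp_mul_sub_mul_sq_gaussianReal {S : ℝ} (hS : 0 ≤ S) (T : ℝ) :
    ∫ x, exp (T * x - S * x ^ 2 / 2) ∂gaussianReal 0 1 =
      √(1 / (1 + S)) * exp (T ^ 2 / (2 + 2 * S)) := by
  have hpdf (x : ℝ) : gaussianPDFReal 0 1 x • exp (T * x - S * x ^ 2 / 2) =
      (√(2 * π))⁻¹ * exp (T * x - (1 + S) * x ^ 2 / 2) := by
    rw [gaussianPDFReal, smul_eq_mul, mul_assoc, ← exp_add]
    congr 2
    · simp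
    · push_cast; ring
  rw [integral_gaussianReal_eq_integral_smul one_ne_zero]
  simp_rw [hpdf]
  rw [integral_const_mul, integral_exp_mul_sub_mul_sq (by linarith), div_eq_mul_one_div (2 * π),
    sqrt_mul (by positivity : (0 : ℝ) ≤ 2 * π), mul_assoc (√(2 * π)),
    inv_mul_cancel_left₀ (by positivity), mul_add, mul_one]

theorem mixture_de_la_pena_is_e_variable (n : ℕ) (z : Fin n → ℝ) :
    (1 / 2 ^ n) * ∑ s : Fin n → Bool,
        Real.sqrt (1 / (1 + ∑ i, (z i) ^ 2)) *
          Real.exp ((∑ i, (if s i then z i else -z i)) ^ 2 /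
            (2 + 2 * ∑ i, (z i) ^ 2)) ≤ 1 := by
  have hS : 0 ≤ ∑ i, z i ^ 2 := sum_nonneg fun i _ => sq_nonneg (z i)
  have hmix (s : Fin n → Bool) : √(1 / (1 + ∑ i, z i ^ 2)) *
      exp ((∑ i, (if s i then z i else -z i)) ^ 2 / (2 + 2 * ∑ i, z i ^ 2)) =
        ∫ x, deLaPena z s x ∂gaussianReal 0 1 :=
    (integral_exp_mul_sub_mul_sq_gaussianReal hS _).symm
  have hint (s : Fin n → Bool) : Integrable (deLaPena z s) (gaussianReal 0 1) :=
    integrable_exp_mul_sub_mul_sq_gaussianReal hS _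
  simp_rw [hmix]
  rw [← integral_finsetSum _ fun s _ => hint s]
  calc (1 / 2 ^ n) * ∫ x, ∑ s : Fin n → Bool, deLaPena z s x ∂gaussianReal 0 1
      ≤ (1 / 2 ^ n) * ∫ _x, (2 : ℝ) ^ n ∂gaussianReal 0 1 := by
        gcongr
        · exact integrable_finsetSum _ fun s _ => hint s
        · exact integrable_const _
        · exact fun x => by simpa only [Fintype.card_fin] using sum_deLaPena_le z x
    _ = 1 := by simp
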